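/- arXiv:1502.00410 — 4 statements merged into one kernel-verified Lean document; each statement's English description precedes it below -/
import Mathlib

section
/- Let n > 2 be an integer with prime factorization n = p₁^{r₁} ⋯ p_t^{r_t}. Define b_{n,k} = gcd{C(n,1), C(n,2), …, C(n,k)} for 1 ≤ k ≤ n, and a_{n,k} = b_{n,k-1} / b_{n,k} for k ≥ 2. Then a_{n,k} = p_i if k is a power of p_i with k ≤ p_i^{r_i} for some i, and a_{n,k} = 1 otherwise. -/
/-!
Write `r = v_p(n)`. From `i * C(n, i) = n * C(n - 1, i - 1)` we get `v_p(C(n, i)) ≥ r - v_p(i)`,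
and for `i = p^j` with `j ≤ r` this is an equality, because Lucas's theorem gives
`C(n - 1, p^j - 1) ≡ 1 [MOD p]` (all the base-`p` digits involved are `p - 1`). Hence
`v_p(b_{n,k}) = r - min(r, ⌊log_p k⌋)`, and passing from `k - 1` to `k` changes this exponent
exactly when `⌊log_p k⌋` jumps below `r`, i.e. when `k = p^m` with `1 ≤ m ≤ r`.
-/

open Finset

namespace Nat

theorem choose_pow_mul_sub_one_modEq_one {p c : ℕ} (hp : p.Prime) (hc : 0 < c) (j : ℕ) :
    (p ^ j * c - 1).choose (p ^ j - 1) ≡ 1 [MOD p] := by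
  have := Fact.mk hp
  induction j with
  | zero => simp [Nat.ModEq.refl]
  | succ j ih =>
    have hp0 := hp.pos
    have base_p_digits : ∀ x, 0 < x → p * x - 1 = (p - 1) + p * (x - 1) := by
      intro x hx
      obtain ⟨y, rfl⟩ : ∃ y, x = y + 1 := ⟨x - 1, by omega⟩
      rw [mul_add, mul_one, Nat.add_sub_cancel]
      omega
    rw [pow_succ', mul_assoc, base_p_digits _ (Nat.mul_pos (pow_pos hp0 j) hc),
      base_p_digits _ (pow_pos hp0 j)]
    refine Choose.choose_modEq_choose_mod_mul_choose_div_nat.trans ?_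
    rw [add_mul_mod_self_left, add_mul_mod_self_left, add_mul_div_left _ _ hp0,
      add_mul_div_left _ _ hp0, mod_eq_of_lt (by omega : p - 1 < p),
      div_eq_of_lt (by omega : p - 1 < p), choose_self, one_mul, zero_add, zero_add]
    exact ih

theorem factorization_choose_pow_of_pow_dvd {p n j : ℕ} (hp : p.Prime) (hn : n ≠ 0)
    (hdvd : p ^ j ∣ n) : (n.choose (p ^ j)).factorization p = n.factorization p - j := by
  have hpj : 0 < p ^ j := pow_pos hp.pos j
  have hpjn : p ^ j ≤ n := le_of_dvd (pos_of_ne_zero hn) hdvd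
  have hcoprime : ((n - 1).choose (p ^ j - 1)).factorization p = 0 := by
    obtain ⟨c, rfl⟩ := hdvd
    refine factorization_eq_zero_of_not_dvd fun hdvd => hp.one_lt.ne' ?_
    have := (modEq_zero_iff_dvd.mpr hdvd).symm.trans
      (choose_pow_mul_sub_one_modEq_one hp (pos_of_ne_zero (right_ne_zero_of_mul hn)) j)
    exact dvd_one.mp (modEq_zero_iff_dvd.mp this.symm)
  have absorption := add_one_mul_choose_eq (n - 1) (p ^ j - 1)
  rw [Nat.sub_add_cancel (by omega), Nat.sub_add_cancel hpj] at absorption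
  have := congrArg (·.factorization p) absorption
  simp only [factorization_mul hn (choose_pos (by omega : p ^ j - 1 ≤ n - 1)).ne',
    factorization_mul (choose_pos hpjn).ne' hpj.ne', Finsupp.add_apply, hcoprime,
    hp.factorization_pow, Finsupp.single_eq_same] at this
  omega

theorem factorization_le_log {p i : ℕ} (hp : 1 < p) (hi : i ≠ 0) : i.factorization p ≤ log p i :=
  (le_log_iff_pow_le hp hi).mpr (ordProj_le p hi)

theorem log_pow_sub_one {q : ℕ} (hq : 1 < q) (m : ℕ) : log q (q ^ m - 1) = m - 1 := by
  cases m with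
  | zero => simp
  | succ m =>
    rw [Nat.add_sub_cancel]
    have := Nat.pow_lt_pow_right hq (lt_add_one m)
    exact log_eq_of_pow_le_of_lt_pow (by omega) (by omega)

theorem log_sub_one_of_ne_pow {q k : ℕ} (hq : 1 < q) (h : ∀ s, k ≠ q ^ s) :
    log q (k - 1) = log q k := by
  obtain rfl | hk := eq_or_ne k 0
  · rfl
  have hk1 : k ≠ 1 := by simpa using h 0
  have := pow_log_le_self q hk
  have := h (log q k)
  exact le_antisymm (log_mono_right (by omega)) ((le_log_iff_pow_le hq (by omega)).mpr (by omega))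

end Nat

open Nat

/-- `b_{n,k}` of the informal statement. -/
def gcdChoose (n k : ℕ) : ℕ := (Icc 1 k).gcd fun i => n.choose i

theorem gcdChoose_ne_zero {n k : ℕ} (hn : n ≠ 0) (hk : 1 ≤ k) : gcdChoose n k ≠ 0 := by
  refine fun h => hn ?_
  simpa using (gcd_eq_zero_iff.mp h) 1 (mem_Icc.mpr ⟨le_rfl, hk⟩)

theorem factorization_gcdChoose {p n k : ℕ} (hp : p.Prime) (hk : 1 ≤ k) (hkn : k ≤ n) :
    (gcdChoose n k).factorization p = n.factorization p - min (n.factorization p) (log p k) := by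
  have hn : n ≠ 0 := by omega
  apply le_antisymm
  · set m := min (n.factorization p) (log p k)
    have hpm : p ^ m ≤ k :=
      (Nat.pow_le_pow_right hp.pos (min_le_right _ _)).trans (pow_log_le_self p (by omega))
    have hdvd : gcdChoose n k ∣ n.choose (p ^ m) :=
      gcd_dvd (mem_Icc.mpr ⟨one_le_pow _ _ hp.pos, hpm⟩)
    have := (factorization_le_iff_dvd (gcdChoose_ne_zero hn hk)
      (choose_pos (hpm.trans hkn)).ne').mpr hdvd p
    rwa [factorization_choose_pow_of_pow_dvd hp hn
      ((pow_dvd_pow p (min_le_left _ _)).trans (ordProj_dvd n p))] at this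
  · rw [← hp.pow_dvd_iff_le_factorization (gcdChoose_ne_zero hn hk)]
    refine dvd_gcd fun i hi => ?_
    obtain ⟨hi1, hik⟩ := mem_Icc.mp hi
    rw [hp.pow_dvd_iff_le_factorization (choose_pos (hik.trans hkn)).ne']
    have := factorization_le_factorization_choose_add (p := p) (hik.trans hkn) (by omega)
    have := factorization_le_log hp.one_lt (by omega : i ≠ 0)
    have := log_mono_right (b := p) hik
    omega

open scoped Classical in
theorem min_log_eq_min_log_sub_one_add {q k r : ℕ} (hq : 1 < q) (hk : 2 ≤ k) :
    min r (log q k) = min r (log q (k - 1)) + if ∃ m, 1 ≤ m ∧ m ≤ r ∧ k = q ^ m then 1 else 0 := by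
  by_cases hpow : ∃ s, k = q ^ s
  · obtain ⟨s, rfl⟩ := hpow
    have hs : 1 ≤ s := by
      rcases s with _ | s
      · simp at hk
      · omega
    rw [log_pow hq, log_pow_sub_one hq]
    by_cases hsr : s ≤ r
    · rw [if_pos ⟨s, hs, hsr, rfl⟩]; omega
    · rw [if_neg]
      · omega
      · rintro ⟨m, -, hmr, hm⟩
        have := Nat.pow_right_injective hq hm
        omega
  · push Not at hpow
    rw [log_sub_one_of_ne_pow hq hpow, if_neg]
    · rfl
    · rintro ⟨m, -, -, hm⟩
      exact hpow m hm

open scoped Classical in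
theorem factorization_gcdChoose_sub_one {q n k : ℕ} (hq : q.Prime) (hk : 2 ≤ k) (hkn : k ≤ n) :
    (gcdChoose n (k - 1)).factorization q = (gcdChoose n k).factorization q +
      if ∃ m, 1 ≤ m ∧ m ≤ n.factorization q ∧ k = q ^ m then 1 else 0 := by
  have := min_log_eq_min_log_sub_one_add (r := n.factorization q) hq.one_lt hk
  rw [factorization_gcdChoose hq (by omega) (by omega), factorization_gcdChoose hq (by omega) hkn]
  split_ifs at this ⊢ <;> omega

theorem gcdChoose_sub_one_eq_mul_of_eq_pow {p m n k : ℕ} (hp : p.Prime) (hm : 1 ≤ m)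
    (hmr : m ≤ n.factorization p) (hkm : k = p ^ m) (hk : 2 ≤ k) (hkn : k ≤ n) :
    gcdChoose n (k - 1) = gcdChoose n k * p := by
  have hB : gcdChoose n k ≠ 0 := gcdChoose_ne_zero (by omega) (by omega)
  refine eq_of_factorization_eq (gcdChoose_ne_zero (by omega) (by omega))
    (mul_ne_zero hB hp.ne_zero) fun q => ?_
  by_cases hq : q.Prime
  · rw [factorization_gcdChoose_sub_one hq hk hkn, Nat.factorization_mul hB hp.ne_zero,
      Finsupp.add_apply, hp.factorization]
    congr 1
    by_cases hpq : p = q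
    · subst hpq
      rw [if_pos ⟨m, hm, hmr, hkm⟩, Finsupp.single_eq_same]
    · rw [Finsupp.single_apply, if_neg hpq, if_neg]
      rintro ⟨s, hs, -, hks⟩
      obtain ⟨m, rfl⟩ : ∃ m', m = m' + 1 := ⟨m - 1, by omega⟩
      obtain ⟨s, rfl⟩ : ∃ s', s = s' + 1 := ⟨s - 1, by omega⟩
      exact hpq (hp.pow_inj hq (hkm.symm.trans hks)).1
  · simp [factorization_eq_zero_of_not_prime _ hq]

theorem gcdChoose_sub_one_eq_of_ne_pow {n k : ℕ} (hk : 2 ≤ k) (hkn : k ≤ n)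
    (h : ∀ p m, p.Prime → 1 ≤ m → m ≤ n.factorization p → k ≠ p ^ m) :
    gcdChoose n (k - 1) = gcdChoose n k := by
  refine eq_of_factorization_eq (gcdChoose_ne_zero (by omega) (by omega))
    (gcdChoose_ne_zero (by omega) (by omega)) fun q => ?_
  by_cases hq : q.Prime
  · rw [factorization_gcdChoose_sub_one hq hk hkn, if_neg, add_zero]
    rintro ⟨m, hm, hmr, hkm⟩
    exact h q m hq hm hmr hkm
  · simp [factorization_eq_zero_of_not_prime _ hq]

theorem stmt0_general (n : ℕ) (k : ℕ) (hk : 2 ≤ k) (hkn : k ≤ n) :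
    (∀ p m : ℕ, p.Prime → p ∣ n → 1 ≤ m → m ≤ n.factorization p → k = p ^ m →
        (Finset.Icc 1 (k - 1)).gcd (fun i => n.choose i) /
          (Finset.Icc 1 k).gcd (fun i => n.choose i) = p) ∧
    ((¬ ∃ p m : ℕ, p.Prime ∧ p ∣ n ∧ 1 ≤ m ∧ m ≤ n.factorization p ∧ k = p ^ m) →
        (Finset.Icc 1 (k - 1)).gcd (fun i => n.choose i) /
          (Finset.Icc 1 k).gcd (fun i => n.choose i) = 1) := by
  change (∀ p m : ℕ, _ → _ → _ → _ → _ → gcdChoose n (k - 1) / gcdChoose n k = p) ∧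
    (_ → gcdChoose n (k - 1) / gcdChoose n k = 1)
  have hB : 0 < gcdChoose n k := pos_of_ne_zero (gcdChoose_ne_zero (by omega) (by omega))
  refine ⟨fun p m hp _ hm hmr hkm => ?_, fun hne => ?_⟩
  · rw [gcdChoose_sub_one_eq_mul_of_eq_pow hp hm hmr hkm hk hkn, Nat.mul_div_cancel_left _ hB]
  · rw [gcdChoose_sub_one_eq_of_ne_pow hk hkn, Nat.div_self hB]
    rintro p m hp hm hmr rfl
    exact hne ⟨p, m, hp, dvd_of_factorization_pos (by omega), hm, hmr, rfl⟩

/-- For `n > 2` with prime factorization, with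
`b n k = gcd {C(n,1), …, C(n,k)}`, the ratio `a_{n,k} = b_{n,k-1}/b_{n,k}` equals `p`
if `k = p^m` is a power of a prime `p` dividing `n` with `m ≤ ord_p n`, and equals `1`
otherwise. -/
theorem stmt0 (n : ℕ) (hn : 2 < n) (k : ℕ) (hk : 2 ≤ k) (hkn : k ≤ n) :
    (∀ p m : ℕ, p.Prime → p ∣ n → 1 ≤ m → m ≤ n.factorization p → k = p ^ m →
        (Finset.Icc 1 (k - 1)).gcd (fun i => n.choose i) /
          (Finset.Icc 1 k).gcd (fun i => n.choose i) = p) ∧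
    ((¬ ∃ p m : ℕ, p.Prime ∧ p ∣ n ∧ 1 ≤ m ∧ m ≤ n.factorization p ∧ k = p ^ m) →
        (Finset.Icc 1 (k - 1)).gcd (fun i => n.choose i) /
          (Finset.Icc 1 k).gcd (fun i => n.choose i) = 1) :=
  stmt0_general n k hk hkn
end

section
/- Let p be a prime and r ≥ 1. For any 1 ≤ s ≤ r there exists a sequence of integers h₁, …, h_s such that C(p^r, p^s) - p^{r-s} = h₁·C(p^r, p^{s-1}) + h₂·C(p^r, p^{s-2}) + ⋯ + h_s·C(p^r, 1). -/
/-!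
Write `C(p^r, p^t) = p^(r-t) · C(p^r - 1, p^t - 1)`. By Lucas's theorem the second factor is
`≡ 1 (mod p)`: all base-`p` digits of `p^r - 1` and `p^t - 1` are `p - 1` or `0`. Hence
`C(p^r, p^s) - p^(r-s)` is divisible by `p^(r-s+1)`, while `p^(r-s+1)` is the gcd of
`C(p^r, p^(s-1))` and `C(p^r, 1) = p^r`, so it is an integer combination of these two terms.
-/

namespace Nat

variable {p : ℕ}

theorem pow_succ_sub_one_eq (hp : 0 < p) (v : ℕ) :
    p ^ (v + 1) - 1 = (p - 1) + p * (p ^ v - 1) := by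
  have : 1 ≤ p ^ v := one_le_pow _ _ hp
  rw [Nat.mul_sub, pow_succ', mul_one]
  have : p ≤ p * p ^ v := Nat.le_mul_of_pos_right _ this
  omega

theorem choose_pow_sub_one_pow_sub_one_modEq_one (hp : p.Prime) {t u : ℕ} (htu : t ≤ u) :
    (p ^ u - 1).choose (p ^ t - 1) ≡ 1 [MOD p] := by
  have : Fact p.Prime := ⟨hp⟩
  induction t generalizing u with
  | zero => simp [Nat.ModEq.refl]
  | succ t ih =>
    obtain ⟨v, rfl⟩ : ∃ v, u = v + 1 := ⟨u - 1, by omega⟩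
    have hlt : p - 1 < p := by have := hp.pos; omega
    have lucas := Choose.choose_modEq_choose_mod_mul_choose_div_nat
      (p := p) (n := p ^ (v + 1) - 1) (k := p ^ (t + 1) - 1)
    rw [pow_succ_sub_one_eq hp.pos, pow_succ_sub_one_eq hp.pos] at lucas ⊢
    simp only [add_mul_mod_self_left, mod_eq_of_lt hlt,
      add_mul_div_left _ _ hp.pos, div_eq_of_lt hlt, zero_add, choose_self, one_mul] at lucas
    exact lucas.trans (ih (by omega))

theorem choose_pow_pow (hp : 0 < p) {t u : ℕ} (htu : t ≤ u) :
    (p ^ u).choose (p ^ t) = p ^ (u - t) * (p ^ u - 1).choose (p ^ t - 1) := by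
  have key := add_one_mul_choose_eq (p ^ u - 1) (p ^ t - 1)
  rw [Nat.sub_add_cancel (one_le_pow _ _ hp), Nat.sub_add_cancel (one_le_pow _ _ hp)] at key
  apply Nat.eq_of_mul_eq_mul_right (pow_pos hp t)
  rw [← key, mul_right_comm, Nat.pow_sub_mul_pow p htu]

end Nat

namespace Int

variable {p : ℕ}

theorem pow_mul_dvd_choose_pow_pow_sub (hp : p.Prime) {t r : ℕ} (htr : t ≤ r) :
    (p : ℤ) ^ (r - t) * p ∣ ((p ^ r).choose (p ^ t) : ℤ) - (p : ℤ) ^ (r - t) := by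
  rw [Nat.choose_pow_pow hp.pos htr, Nat.cast_mul, Nat.cast_pow, ← mul_sub_one]
  exact mul_dvd_mul_left _
    (Nat.modEq_iff_dvd.mp (Nat.choose_pow_sub_one_pow_sub_one_modEq_one hp htr).symm)

theorem exists_mul_choose_pow_pow_add_mul_pow_eq (hp : p.Prime) {t r : ℕ} (htr : t ≤ r) :
    ∃ a b : ℤ, a * (p ^ r).choose (p ^ t) + b * (p : ℤ) ^ r = (p : ℤ) ^ (r - t) := by
  have hcop : Nat.Coprime ((p ^ r - 1).choose (p ^ t - 1)) (p ^ t) := by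
    refine Nat.Coprime.pow_right _ ?_
    rw [Nat.Coprime, (Nat.choose_pow_sub_one_pow_sub_one_modEq_one hp htr).gcd_eq, Nat.gcd_one_left]
  obtain ⟨a, b, hab⟩ := Nat.isCoprime_iff_coprime.mpr hcop
  refine ⟨a, b, ?_⟩
  have hpow : (p : ℤ) ^ r = p ^ (r - t) * p ^ t := (pow_sub_mul_pow _ htr).symm
  rw [Nat.choose_pow_pow hp.pos htr]
  push_cast at hab ⊢
  linear_combination (p : ℤ) ^ (r - t) * hab + b * hpow

end Int

theorem Finset.exists_sum_mul_eq_mul_add_mul {ι R : Type*} [NonUnitalNonAssocSemiring R]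
    {S : Finset ι} {i j : ι} (hi : i ∈ S) (hj : j ∈ S) (f : ι → R) (a b : R) :
    ∃ h : ι → R, ∑ k ∈ S, h k * f k = a * f i + b * f j := by
  classical
  refine ⟨fun k => (if k = i then a else 0) + (if k = j then b else 0), ?_⟩
  simp only [add_mul, ite_mul, zero_mul, Finset.sum_add_distrib, Finset.sum_ite_eq', hi, hj,
    if_true]

theorem stmt2_general (p r s : ℕ) (hp : p.Prime) (hs : 1 ≤ s) (hsr : s ≤ r) :
    ∃ h : ℕ → ℤ,
      ((p ^ r).choose (p ^ s) : ℤ) - (p : ℤ) ^ (r - s) =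
        ∑ i ∈ Finset.Icc 1 s, h i * ((p ^ r).choose (p ^ (s - i)) : ℤ) := by
  obtain ⟨m, hm⟩ := Int.pow_mul_dvd_choose_pow_pow_sub hp hsr
  obtain ⟨a, b, hab⟩ :=
    Int.exists_mul_choose_pow_pow_add_mul_pow_eq hp (show s - 1 ≤ r by omega)
  obtain ⟨h, hh⟩ := Finset.exists_sum_mul_eq_mul_add_mul
    (Finset.mem_Icc.mpr ⟨le_rfl, hs⟩) (Finset.mem_Icc.mpr ⟨hs, le_rfl⟩)
    (fun i => ((p ^ r).choose (p ^ (s - i)) : ℤ)) (m * a) (m * b)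
  refine ⟨h, ?_⟩
  rw [hm, hh, Nat.sub_self, pow_zero, Nat.choose_one_right, ← pow_succ,
    show r - s + 1 = r - (s - 1) by omega, ← hab]
  push_cast
  ring

/-- For a prime `p`, `r ≥ 1` and `1 ≤ s ≤ r` there are integers
`h₁, …, h_s` with `C(p^r, p^s) - p^(r-s) = Σ_{i=1}^{s} h_i · C(p^r, p^(s-i))`. -/
theorem stmt2 (p r s : ℕ) (hp : p.Prime) (hr : 1 ≤ r) (hs : 1 ≤ s) (hsr : s ≤ r) :
    ∃ h : ℕ → ℤ,
      ((p ^ r).choose (p ^ s) : ℤ) - (p : ℤ) ^ (r - s) =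
        ∑ i ∈ Finset.Icc 1 s, h i * ((p ^ r).choose (p ^ (s - i)) : ℤ) :=
  stmt2_general p r s hp hs hsr
end

section
/- Let p be a prime, r ≥ 1, and let b_{p^r, k} = gcd{C(p^r, 1), …, C(p^r, k)}. Then b_{p^r, k} = p^{r-t} whenever p^t ≤ k < p^{t+1} and t ≤ r; in particular the graded ring ℤ[ω]/(b_{p^r,k}·ω^k : 1 ≤ k ≤ p^r) equals ℤ[ω]/(p^r ω, p^{r-1} ω^p, p^{r-2} ω^{p²}, …, ω^{p^r}). -/
/-!
By Kummer's theorem, `v_p (C(p^r, i)) = r - v_p(i)` for `0 < i ≤ p^r`. For `i < p^(t+1)` this is at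
least `r - t`, and the value `r - t` is attained at `i = p^t`, while `C(p^r, 1) = p^r` forces the
gcd to be a power of `p`. Hence `b_{p^r,k} = p^(r - log_p k)`, and every generator
`b_{p^r,k} ω^k` of the first ideal is a multiple of `p^(r-t) ω^(p^t)` with `t = log_p k`, which is
itself the generator for `k = p^t`.
-/

open Polynomial

namespace Nat

variable {p n t k : ℕ}

lemma prime_pow_dvd_choose_prime_pow_iff (hp : p.Prime) (hkn : k ≤ p ^ n) (hk0 : k ≠ 0) {s : ℕ} :
    p ^ s ∣ (p ^ n).choose k ↔ s ≤ n - k.factorization p := by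
  rw [hp.pow_dvd_iff_le_factorization (choose_pos hkn).ne', factorization_choose_prime_pow hp hkn hk0]

theorem gcd_choose_prime_pow (hp : p.Prime) (h1 : p ^ t ≤ k) (h2 : k < p ^ (t + 1))
    (ht : t ≤ n) : (Finset.Icc 1 k).gcd (fun i => (p ^ n).choose i) = p ^ (n - t) := by
  have hpt0 : p ^ t ≠ 0 := (pow_pos hp.pos t).ne'
  apply dvd_antisymm
  · have hdvd_one : (Finset.Icc 1 k).gcd (fun i => (p ^ n).choose i) ∣ p ^ n := by
      simpa using Finset.gcd_dvd (f := fun i => (p ^ n).choose i)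
        (Finset.mem_Icc.2 ⟨le_rfl, Nat.one_le_iff_ne_zero.2 hpt0 |>.trans h1⟩)
    obtain ⟨s, -, hs⟩ := (dvd_prime_pow hp).1 hdvd_one
    have hdvd_pt : p ^ s ∣ (p ^ n).choose (p ^ t) :=
      hs ▸ Finset.gcd_dvd (Finset.mem_Icc.2 ⟨Nat.one_le_iff_ne_zero.2 hpt0, h1⟩)
    rw [prime_pow_dvd_choose_prime_pow_iff hp (Nat.pow_le_pow_right hp.pos ht) hpt0,
      factorization_pow_self hp] at hdvd_pt
    exact hs ▸ pow_dvd_pow p hdvd_pt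
  · refine Finset.dvd_gcd fun i hi => ?_
    rw [Finset.mem_Icc] at hi
    rcases le_or_gt i (p ^ n) with hin | hin
    · have hi0 : i ≠ 0 := by omega
      have hval : i.factorization p < t + 1 :=
        (Nat.pow_lt_pow_iff_right hp.one_lt).1 ((ordProj_le p hi0).trans_lt (hi.2.trans_lt h2))
      rw [prime_pow_dvd_choose_prime_pow_iff hp hin hi0]
      omega
    · rw [choose_eq_zero_of_lt hin]
      exact dvd_zero _

theorem gcd_choose_prime_pow_eq_pow_sub_log (hp : p.Prime) (hk0 : k ≠ 0) (hkn : k ≤ p ^ n) :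
    (Finset.Icc 1 k).gcd (fun i => (p ^ n).choose i) = p ^ (n - log p k) :=
  gcd_choose_prime_pow hp (pow_log_le_self p hk0) (lt_pow_succ_log_self hp.one_lt k)
    ((log_mono_right hkn).trans_eq (log_pow hp.one_lt n))

end Nat

theorem stmt16_general (p r t k : ℕ) (hp : p.Prime)
    (h1 : p ^ t ≤ k) (h2 : k < p ^ (t + 1)) (ht : t ≤ r) :
    (Finset.Icc 1 k).gcd (fun i => (p ^ r).choose i) = p ^ (r - t) ∧
    Ideal.span {f : Polynomial ℤ | ∃ k', 1 ≤ k' ∧ k' ≤ p ^ r ∧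
        f = C (((Finset.Icc 1 k').gcd (fun i => (p ^ r).choose i) : ℕ) : ℤ) * X ^ k'} =
      Ideal.span {f : Polynomial ℤ | ∃ t', t' ≤ r ∧
        f = C ((p : ℤ) ^ (r - t')) * X ^ (p ^ t')} := by
  refine ⟨Nat.gcd_choose_prime_pow hp h1 h2 ht, le_antisymm ?_ ?_⟩
  · rw [Ideal.span_le]
    rintro _ ⟨k', hk'1, hk'r, rfl⟩
    have hk'0 : k' ≠ 0 := by omega
    rw [Nat.gcd_choose_prime_pow_eq_pow_sub_log hp hk'0 hk'r]
    refine (Ideal.span _).mem_of_dvd ?_ (Ideal.subset_span ⟨Nat.log p k',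
      (Nat.log_mono_right hk'r).trans_eq (Nat.log_pow hp.one_lt r), rfl⟩)
    push_cast
    exact mul_dvd_mul_left _ (pow_dvd_pow X (Nat.pow_log_le_self p hk'0))
  · rw [Ideal.span_le]
    rintro _ ⟨t', ht', rfl⟩
    refine Ideal.subset_span ⟨p ^ t', Nat.one_le_pow _ _ hp.pos,
      Nat.pow_le_pow_right hp.pos ht', ?_⟩
    rw [Nat.gcd_choose_prime_pow hp le_rfl (Nat.pow_lt_pow_succ hp.one_lt) ht']
    push_cast
    rfl

/-- let `b_{p^r,k} = gcd{C(p^r,1), …, C(p^r,k)}`.  Then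
`b_{p^r,k} = p^{r-t}` whenever `p^t ≤ k < p^{t+1}` and `t ≤ r`; in particular the
ideal `(b_{p^r,k}·ω^k : 1 ≤ k ≤ p^r)` of `ℤ[ω]` equals the ideal
`(p^r ω, p^{r-1} ω^p, p^{r-2} ω^{p²}, …, ω^{p^r})`. -/
theorem stmt16 (p r t k : ℕ) (hp : p.Prime) (hr : 1 ≤ r)
    (h1 : p ^ t ≤ k) (h2 : k < p ^ (t + 1)) (ht : t ≤ r) :
    (Finset.Icc 1 k).gcd (fun i => (p ^ r).choose i) = p ^ (r - t) ∧
    Ideal.span {f : Polynomial ℤ | ∃ k', 1 ≤ k' ∧ k' ≤ p ^ r ∧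
        f = C (((Finset.Icc 1 k').gcd (fun i => (p ^ r).choose i) : ℕ) : ℤ) * X ^ k'} =
      Ideal.span {f : Polynomial ℤ | ∃ t', t' ≤ r ∧
        f = C ((p : ℤ) ^ (r - t')) * X ^ (p ^ t')} :=
  stmt16_general p r t k hp h1 h2 ht
end

section
/- Let δ be a derivation-like differential of degree +1 on the 𝔽₂-algebra generated by odd classes ς₁, ς₅, ς₉, ς₁₇ and even classes ω = δ(ς₁), x₃ = δ(ς₅), x₅ = δ(ς₉), x₉ = δ(ς₁₇) with δ² = 0 and δ(even classes) = 0. For t ∈ {1,3,5,9} let ς^{(t)} denote the odd generator with δ(ς^{(t)}) = x_t, where x₁ := ω (so ς^{(1)} = ς₁, ς^{(3)} = ς₅, ς^{(5)} = ς₉, ς^{(9)} = ς₁₇). For multi-indices I, J ⊆ {1,3,5,9} set ς_I = ∏_{t∈I} ς^{(t)} and c_I = δ(ς_I). Then c_I · c_J = Σ_{t∈I} x_t · (∏_{s ∈ I_t ∩ J} (ς^{(s)})²) · c_{⟨I_t, J⟩}, where I_t = I \ {t} and ⟨I_t, J⟩ = (I_t ∪ J) \ (I_t ∩ J) is the symmetric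 difference. -/
/-- in characteristic 2, for a differential `δ` (an additive map
satisfying the Leibniz rule with `δ² = 0`) and classes `ς^{(t)}`, `t ∈ {1,3,5,9}`
(indexed here by `Fin 4`), with `x_t = δ(ς^{(t)})`, setting `ς_I = ∏_{t∈I} ς^{(t)}`
and `c_I = δ(ς_I)`, one has
`c_I·c_J = Σ_{t∈I} x_t · (∏_{s ∈ I_t ∩ J} (ς^{(s)})²) · c_{⟨I_t,J⟩}`,
where `I_t = I \ {t}` and `⟨I_t,J⟩` is the symmetric difference of `I_t` and `J`. -/
theorem stmt18 {A : Type*} [CommRing A] (hchar : (2 : A) = 0)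
    (δ : A →+ A) (hleib : ∀ a b : A, δ (a * b) = δ a * b + a * δ b)
    (hδδ : ∀ a : A, δ (δ a) = 0) (ς : Fin 4 → A) :
    ∀ I J : Finset (Fin 4),
      δ (∏ t ∈ I, ς t) * δ (∏ t ∈ J, ς t) =
        ∑ t ∈ I, δ (ς t) * (∏ s ∈ (I.erase t ∩ J), ς s ^ 2) *
          δ (∏ u ∈ symmDiff (I.erase t) J, ς u) := by
  classical
  -- δ(1) = 0
  have hδ1 : δ (1 : A) = 0 := by
    have h := hleib 1 1
    simp only [one_mul, mul_one] at h
    exact (left_eq_add.mp h)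
  -- Leibniz for finite products
  have dprod : ∀ S : Finset (Fin 4),
      δ (∏ t ∈ S, ς t) = ∑ t ∈ S, δ (ς t) * ∏ s ∈ S.erase t, ς s := by
    intro S
    induction S using Finset.induction_on with
    | empty => simpa using hδ1
    | @insert a S ha ih =>
      rw [Finset.prod_insert ha, hleib, ih, Finset.sum_insert ha,
        Finset.erase_insert ha, Finset.mul_sum]
      congr 1
      refine Finset.sum_congr rfl fun t ht => ?_
      have hta : t ≠ a := fun h => ha (h ▸ ht)
      have haS : a ∉ S.erase t := fun h => ha (Finset.mem_of_mem_erase h)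
      rw [Finset.erase_insert_of_ne hta.symm, Finset.prod_insert haS]
      ring
  -- square-product identity
  have key : ∀ S T : Finset (Fin 4),
      (∏ s ∈ S ∩ T, ς s ^ 2) * ∏ u ∈ symmDiff S T, ς u =
        (∏ s ∈ S, ς s) * ∏ s ∈ T, ς s := by
    intro S T
    have h1 : symmDiff S T = (S \ T) ∪ (T \ S) := by
      ext a
      simp [Finset.mem_symmDiff, Finset.mem_union, Finset.mem_sdiff]
    rw [h1, Finset.prod_union disjoint_sdiff_sdiff]
    simp only [sq]
    rw [Finset.prod_mul_distrib]
    have h2 : ∀ U V : Finset (Fin 4),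
        (∏ s ∈ U ∩ V, ς s) * ∏ s ∈ U \ V, ς s = ∏ s ∈ U, ς s :=
      fun U V => Finset.prod_inter_mul_prod_sdiff U V ς
    calc (∏ s ∈ S ∩ T, ς s) * (∏ s ∈ S ∩ T, ς s) *
          ((∏ u ∈ S \ T, ς u) * ∏ u ∈ T \ S, ς u)
        = ((∏ s ∈ S ∩ T, ς s) * ∏ s ∈ S \ T, ς s) *
          ((∏ s ∈ T ∩ S, ς s) * ∏ s ∈ T \ S, ς s) := by
          rw [Finset.inter_comm T S]; ring
      _ = _ := by rw [h2, h2]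
  -- erase/symmDiff lemmas
  have symm_erase_right : ∀ (S T : Finset (Fin 4)) (u : Fin 4), u ∈ T → u ∉ S →
      (symmDiff S T).erase u = symmDiff S (T.erase u) := by
    intro S T u huT huS
    ext a
    by_cases hau : a = u
    · subst hau; simp [Finset.mem_symmDiff, Finset.mem_erase, huT, huS]
    · simp only [Finset.mem_erase, Finset.mem_symmDiff, hau, Ne, not_false_iff,
        true_and, false_and]
  have symm_erase_left : ∀ (S T : Finset (Fin 4)) (u : Fin 4), u ∈ S → u ∉ T →
      (symmDiff S T).erase u = symmDiff (S.erase u) T := by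
    intro S T u huS huT
    ext a
    by_cases hau : a = u
    · subst hau; simp [Finset.mem_symmDiff, Finset.mem_erase, huT, huS]
    · simp only [Finset.mem_erase, Finset.mem_symmDiff, hau, Ne, not_false_iff,
        true_and, false_and]
  intro I J
  -- the symmetric "extra" summand
  set F : Fin 4 → Fin 4 → A := fun t u =>
    δ (ς t) * δ (ς u) * (∏ s ∈ (I.erase t).erase u, ς s) * ∏ s ∈ J, ς s with hF
  -- LHS expansion
  have hL : δ (∏ t ∈ I, ς t) * δ (∏ t ∈ J, ς t) =
      ∑ t ∈ I, (∑ u ∈ I.erase t ∩ J, F t u +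
        ∑ u ∈ J \ I.erase t,
          δ (ς t) * δ (ς u) * (∏ s ∈ I.erase t, ς s) * ∏ s ∈ J.erase u, ς s) := by
    rw [dprod I, dprod J, Finset.sum_mul]
    refine Finset.sum_congr rfl fun t ht => ?_
    rw [Finset.mul_sum]
    have hsplit : ∀ g : Fin 4 → A,
        ∑ u ∈ J, g u = ∑ u ∈ J ∩ I.erase t, g u + ∑ u ∈ J \ I.erase t, g u :=
      fun g => (Finset.sum_inter_add_sum_sdiff J (I.erase t) g).symm
    rw [hsplit, Finset.inter_comm J (I.erase t)]
    congr 1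
    · refine Finset.sum_congr rfl fun u hu => ?_
      have huI : u ∈ I.erase t := (Finset.mem_inter.mp hu).1
      have huJ : u ∈ J := (Finset.mem_inter.mp hu).2
      have e1 : ς u * ∏ s ∈ (I.erase t).erase u, ς s = ∏ s ∈ I.erase t, ς s :=
        Finset.mul_prod_erase (I.erase t) ς huI
      have e2 : ς u * ∏ s ∈ J.erase u, ς s = ∏ s ∈ J, ς s :=
        Finset.mul_prod_erase J ς huJ
      simp only [hF]
      rw [← e1, ← e2]
      ring
    · refine Finset.sum_congr rfl fun u hu => ?_
      ring
  -- RHS expansion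
  have hR : (∑ t ∈ I, δ (ς t) * (∏ s ∈ (I.erase t ∩ J), ς s ^ 2) *
        δ (∏ u ∈ symmDiff (I.erase t) J, ς u)) =
      ∑ t ∈ I, (∑ u ∈ I.erase t \ J, F t u +
        ∑ u ∈ J \ I.erase t,
          δ (ς t) * δ (ς u) * (∏ s ∈ I.erase t, ς s) * ∏ s ∈ J.erase u, ς s) := by
    refine Finset.sum_congr rfl fun t ht => ?_
    rw [dprod, Finset.mul_sum]
    have hsymm : symmDiff (I.erase t) J = (I.erase t \ J) ∪ (J \ I.erase t) := by
      ext a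
      simp [Finset.mem_symmDiff, Finset.mem_union, Finset.mem_sdiff]
    rw [hsymm, Finset.sum_union disjoint_sdiff_sdiff]
    congr 1
    · refine Finset.sum_congr rfl fun u hu => ?_
      have huI : u ∈ I.erase t := (Finset.mem_sdiff.mp hu).1
      have huJ : u ∉ J := (Finset.mem_sdiff.mp hu).2
      have e1 : (symmDiff (I.erase t) J).erase u = symmDiff ((I.erase t).erase u) J :=
        symm_erase_left _ _ _ huI huJ
      have e2 : I.erase t ∩ J = (I.erase t).erase u ∩ J := by
        have hnm : u ∉ I.erase t ∩ J := fun h => huJ (Finset.mem_inter.mp h).2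
        rw [Finset.erase_inter u, Finset.erase_eq_of_notMem hnm]
      rw [← hsymm, e1, e2]
      have hk := key ((I.erase t).erase u) J
      simp only [hF]
      calc (δ (ς t) * ∏ s ∈ (I.erase t).erase u ∩ J, ς s ^ 2) *
            (δ (ς u) * ∏ s ∈ symmDiff ((I.erase t).erase u) J, ς s)
          = δ (ς t) * δ (ς u) *
            ((∏ s ∈ (I.erase t).erase u ∩ J, ς s ^ 2) *
              ∏ s ∈ symmDiff ((I.erase t).erase u) J, ς s) := by ring
        _ = _ := by rw [hk]; ring
    · refine Finset.sum_congr rfl fun u hu => ?_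
      have huJ : u ∈ J := (Finset.mem_sdiff.mp hu).1
      have huI : u ∉ I.erase t := (Finset.mem_sdiff.mp hu).2
      have e1 : (symmDiff (I.erase t) J).erase u = symmDiff (I.erase t) (J.erase u) :=
        symm_erase_right _ _ _ huJ huI
      have e2 : I.erase t ∩ J = I.erase t ∩ J.erase u := by
        have hnm : u ∉ I.erase t ∩ J := fun h => huI (Finset.mem_inter.mp h).1
        rw [Finset.inter_erase u, Finset.erase_eq_of_notMem hnm]
      rw [← hsymm, e1, e2]
      have hk := key (I.erase t) (J.erase u)
      calc (δ (ς t) * ∏ s ∈ I.erase t ∩ J.erase u, ς s ^ 2) *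
            (δ (ς u) * ∏ s ∈ symmDiff (I.erase t) (J.erase u), ς s)
          = δ (ς t) * δ (ς u) *
            ((∏ s ∈ I.erase t ∩ J.erase u, ς s ^ 2) *
              ∏ s ∈ symmDiff (I.erase t) (J.erase u), ς s) := by ring
        _ = _ := by rw [hk]; ring
  rw [hL, hR, Finset.sum_add_distrib, Finset.sum_add_distrib, add_left_inj]
  -- remaining: the two "diagonal" double sums agree
  set C : A := ∑ t ∈ I, ∑ u ∈ I.erase t ∩ J, F t u with hC
  set D : A := ∑ t ∈ I, ∑ u ∈ I.erase t \ J, F t u with hD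
  -- their sum is the full off-diagonal sum, which vanishes in char 2
  have hCD : C + D = 0 := by
    have hsum : C + D = ∑ t ∈ I, ∑ u ∈ I.erase t, F t u := by
      rw [hC, hD, ← Finset.sum_add_distrib]
      exact Finset.sum_congr rfl fun t _ =>
        Finset.sum_inter_add_sum_sdiff (I.erase t) J (F t)
    rw [hsum, Finset.sum_sigma']
    refine Finset.sum_involution (fun p _ => ⟨p.2, p.1⟩) ?_ ?_ ?_ ?_
    · intro p hp
      have h1 := Finset.mem_sigma.mp hp
      have hsym : F p.2 p.1 = F p.1 p.2 := by
        simp only [hF]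
        rw [Finset.erase_right_comm]
        ring
      show F p.1 p.2 + F p.2 p.1 = 0
      rw [hsym, ← two_mul, hchar, zero_mul]
    · intro p hp _
      have h1 := Finset.mem_sigma.mp hp
      have hne : p.2 ≠ p.1 := (Finset.mem_erase.mp h1.2).1
      intro hcontra
      exact hne (congrArg Sigma.fst hcontra)
    · intro p hp
      have h1 := Finset.mem_sigma.mp hp
      refine Finset.mem_sigma.mpr ⟨Finset.mem_of_mem_erase h1.2, ?_⟩
      exact Finset.mem_erase.mpr ⟨(Finset.mem_erase.mp h1.2).1.symm, h1.1⟩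
    · intro p hp
      rfl
  linear_combination hCD - D * hchar
end
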